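/- arXiv:1507.04462 — 2 statements merged into one kernel-verified Lean document; each statement's English description precedes it below -/
import Mathlib

section
/- In a state satisfying the credit-conservation invariant with total credit C, if the chief executive node's hold credit plus the sum of credits recorded for affected nodes equals C, then the sum of credits held by all non-affected nodes other than the chief executive, plus all in-transit message credits, equals 0; consequently (since credits are nonnegative) every non-affected node other than C_E holds zero credit and there are no in-transit messages carrying positive credit. -/
open Finset

theorem sum_univ_sdiff_insert {ι M : Type*} [Fintype ι] [DecidableEq ι] [AddCommGroup M]
    (f : ι → M) {a : ι} {s : Finset ι} (ha : a ∉ s) :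
    ∑ i ∈ univ \ insert a s, f i = ∑ i, f i - (f a + ∑ i ∈ s, f i) := by
  rw [sum_sdiff_eq_sub (subset_univ _), sum_insert ha]

theorem forall_eq_zero_of_sum_add_sum_eq_zero {ι κ M : Type*} [AddCommMonoid M] [PartialOrder M]
    [IsOrderedAddMonoid M] {f : ι → M} {g : κ → M} {s : Finset ι} {t : Finset κ}
    (hf : ∀ i ∈ s, 0 ≤ f i) (hg : ∀ j ∈ t, 0 ≤ g j)
    (h : ∑ i ∈ s, f i + ∑ j ∈ t, g j = 0) :
    (∀ i ∈ s, f i = 0) ∧ ∀ j ∈ t, g j = 0 := by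
  obtain ⟨hs, ht⟩ := (add_eq_zero_iff_of_nonneg (sum_nonneg hf) (sum_nonneg hg)).mp h
  exact ⟨(sum_eq_zero_iff_of_nonneg hf).mp hs, (sum_eq_zero_iff_of_nonneg hg).mp ht⟩

/-- Weak-termination condition (Equation 1): if the chief executive's credit
plus the recorded affected-node credits equals the total `C`, then all other
non-affected nodes hold zero and no in-transit message carries positive
credit. -/
theorem stmt3 {ι μ : Type*} [Fintype ι] [Fintype μ] [DecidableEq ι]
    (C : ℚ) (credit : ι → ℚ) (msg : μ → ℚ)
    (cE : ι) (affected : Finset ι) (hcE : cE ∉ affected)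
    (hcred : ∀ i, 0 ≤ credit i) (hmsg : ∀ m, 0 ≤ msg m)
    (recorded : ℚ) (hrec : recorded = ∑ i ∈ affected, credit i)
    (hconv : ∑ i, credit i + ∑ m, msg m = C)
    (hweak : credit cE + recorded = C) :
    ((∑ i ∈ Finset.univ \ insert cE affected, credit i) + ∑ m, msg m = 0) ∧
    (∀ i, i ∉ affected → i ≠ cE → credit i = 0) ∧
    (∀ m, ¬ 0 < msg m) := by
  have hzero : (∑ i ∈ univ \ insert cE affected, credit i) + ∑ m, msg m = 0 := by
    rw [sum_univ_sdiff_insert credit hcE, ← hrec, hweak]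
    linarith
  obtain ⟨hidle, hquiet⟩ :=
    forall_eq_zero_of_sum_add_sum_eq_zero (fun i _ => hcred i) (fun m _ => hmsg m) hzero
  refine ⟨hzero, fun i hi hne => hidle i ?_, fun m => (hquiet m (mem_univ m)).not_gt⟩
  simp [hi, hne]
end

section
/- In a dynamic tree where each non-root node, upon becoming passive, reassigns all of its active children to a designated new parent (either its own parent or one chosen active child), the parent pointers always form a forest with no cycles among active nodes, and following parent pointers from any active node reaches the current chief executive node in finitely many steps. -/
/-- `v` reaches `r` by following parent pointers finitely many times. -/
def Reaches {ι : Type*} (parent : ι → ι) (r v : ι) : Prop :=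
  ∃ k : ℕ, parent^[k] v = r

/-!
Let `depth v` be the number of steps from `v` to the old root `r`. After the redirection every
remaining node other than the new root `r'` points to a remaining node that is either `r'` or
strictly shallower, so `depth` is a potential that forces every pointer path to end at `r'`. Since
`r'` is a fixed point, a node lying on a cycle and reaching `r'` must be `r'` itself.
-/

open Function

theorem Function.IsPeriodicPt.eq_of_iterate_eq_of_isFixedPt {ι : Type*} {f : ι → ι}
    {k n : ℕ} {x y : ι} (hx : IsPeriodicPt f k x) (hk : 0 < k) (hy : IsFixedPt f y)
    (h : f^[n] x = y) : x = y :=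
  (hx.iterate n).eq_of_apply_eq_same ((hy.iterate n).isPeriodicPt k) hk
    (by rw [h, (hy.iterate n).eq])

theorem Reaches.of_potential {ι : Type*} {f : ι → ι} {r : ι} {p : ι → Prop} (μ : ι → ℕ)
    (hstep : ∀ v, p v → v ≠ r → p (f v) ∧ (f v = r ∨ μ (f v) < μ v)) {v : ι} (hv : p v) :
    Reaches f r v := by
  induction hμ : μ v using Nat.strong_induction_on generalizing v with
  | _ n ih =>
    by_cases hvr : v = r
    · exact ⟨0, hvr⟩
    obtain ⟨hfv, hr | hlt⟩ := hstep v hv hvr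
    · exact ⟨1, hr⟩
    · obtain ⟨k, hk⟩ := ih _ (hμ ▸ hlt) hfv rfl
      exact ⟨k + 1, hk⟩

/-- Junk value `0` when `v` does not reach `r`. -/
noncomputable def depth {ι : Type*} (f : ι → ι) (r v : ι) : ℕ :=
  sInf {k | f^[k] v = r}

theorem Reaches.depth_apply_lt {ι : Type*} {f : ι → ι} {r v : ι} (h : Reaches f r v)
    (hv : v ≠ r) : depth f r (f v) < depth f r v := by
  have hmem : f^[depth f r v] v = r := Nat.sInf_mem h
  have hpos : depth f r v ≠ 0 := fun h0 => hv (by rwa [h0] at hmem)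
  obtain ⟨n, hn⟩ := Nat.exists_eq_succ_of_ne_zero hpos
  rw [hn, iterate_succ_apply] at hmem
  exact hn ▸ Nat.lt_succ_of_le (Nat.sInf_le hmem)

/-- The parent pointers after `d` becomes passive, with `r'` the chief executive afterwards. -/
def redirect {ι : Type*} [DecidableEq ι] (parent : ι → ι) (d w r' c : ι) : ι :=
  if c = r' then r' else if parent c = d then w else parent c

theorem redirect_self {ι : Type*} [DecidableEq ι] (parent : ι → ι) (d w r' : ι) :
    IsFixedPt (redirect parent d w r') r' :=
  if_pos rfl

theorem redirect_step {ι : Type*} [DecidableEq ι] {parent : ι → ι} {r d w r' : ι}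
    (hall : ∀ v, Reaches parent r v)
    (hcase : (d ≠ r ∧ w = parent d ∧ r' = r) ∨ (d = r ∧ parent w = d ∧ w ≠ d ∧ r' = w))
    {v : ι} (hvr : v ≠ r') (hvd : v ≠ d) :
    redirect parent d w r' v ≠ d ∧
      (redirect parent d w r' v = r' ∨
        depth parent r (redirect parent d w r' v) < depth parent r v) := by
  unfold redirect
  rw [if_neg hvr]
  rcases hcase with ⟨hdr, rfl, rfl⟩ | ⟨rfl, -, hwd, rfl⟩
  · have hd := (hall d).depth_apply_lt hdr
    have hv := (hall v).depth_apply_lt hvr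
    split_ifs with hp
    · exact ⟨fun h => hd.ne (congrArg _ h), Or.inr (hd.trans (hp ▸ hv))⟩
    · exact ⟨hp, Or.inr hv⟩
  · split_ifs with hp
    · exact ⟨hwd, Or.inl rfl⟩
    · exact ⟨hp, Or.inr ((hall v).depth_apply_lt hvd)⟩

theorem stmt13_general {ι : Type*} [DecidableEq ι]
    (parent : ι → ι) (r : ι)
    (hall : ∀ v, Reaches parent r v)
    (d w r' : ι)
    (hcase : (d ≠ r ∧ w = parent d ∧ r' = r) ∨
             (d = r ∧ parent w = d ∧ w ≠ d ∧ r' = w))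
    (parent' : ι → ι)
    (hparent' : ∀ c, parent' c =
      if c = r' then r' else if parent c = d then w else parent c) :
    (∀ v, v ≠ d → Reaches parent' r' v) ∧
    (∀ v, v ≠ r' → v ≠ d → ∀ k, 0 < k → parent'^[k] v ≠ v) := by
  obtain rfl : parent' = redirect parent d w r' := funext hparent'
  have hreach : ∀ v, v ≠ d → Reaches (redirect parent d w r') r' v := fun _ hv =>
    Reaches.of_potential (depth parent r) (fun _ hu hur => redirect_step hall hcase hur hu) hv
  refine ⟨hreach, fun v hvr hvd k hk hcyc => hvr ?_⟩
  obtain ⟨n, hn⟩ := hreach v hvd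
  exact IsPeriodicPt.eq_of_iterate_eq_of_isFixedPt hcyc hk (redirect_self parent d w r') hn

/-- When a node `d` becomes passive, its children are redirected to a new
parent `w`: either `d ≠ r` and `w = parent d` (root unchanged), or `d = r`
hands over to a chosen child `w`, which becomes the new chief executive `r'`.
The parent pointers remain acyclic on the remaining nodes and every remaining
node still reaches the current chief executive in finitely many steps. -/
theorem stmt13 {ι : Type*} [DecidableEq ι]
    (parent : ι → ι) (r : ι) (hr : parent r = r)
    (hall : ∀ v, Reaches parent r v)
    (d w r' : ι)
    (hcase : (d ≠ r ∧ w = parent d ∧ r' = r) ∨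
             (d = r ∧ parent w = d ∧ w ≠ d ∧ r' = w))
    (parent' : ι → ι)
    (hparent' : ∀ c, parent' c =
      if c = r' then r' else if parent c = d then w else parent c) :
    (∀ v, v ≠ d → Reaches parent' r' v) ∧
    (∀ v, v ≠ r' → v ≠ d → ∀ k, 0 < k → parent'^[k] v ≠ v) :=
  stmt13_general parent r hall d w r' hcase parent' hparent'
end
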